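/- Let l₁, l₂, l₃, l₄, l₅ be i.i.d. random variables each uniformly distributed on {1, 2, 3, 4, 5, 6, 7, 8, 9}, and let S = l₁ + l₂ + l₃ + l₄ + l₅. Then P(S > 25 | max(l₁,…,l₅) = 6) < P(S > 25). That is, for a listener who expects the long-biased speaker to reveal the longest stick in the sample, observing a stick of length 6 (weakly positive evidence, since 6 > 5) strictly decreases the probability that the average stick length exceeds 5, relative to the prior — the weak evidence effect. -/
import Mathlib


open Finset

set_option maxRecDepth 100000 in
private lemma count126 :
    ((Fintype.piFinset (fun _ : Fin 5 => Finset.Icc 1 6)).filter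
      (fun l => 25 < ∑ i, l i)).card = 126 := by decide

/-- The weak evidence effect: for five i.i.d. stick lengths uniform on
`{1,…,9}`, conditioning on the maximum stick being `6` (what a pragmatic
listener facing a maximally long-biased speaker does upon seeing a 6-inch
stick) strictly decreases the probability that the sum exceeds `25`
(i.e. that the average exceeds `5`), relative to the prior. -/
theorem weak_evidence_effect_pragmatic_listener :
    let T : Finset (Fin 5 → ℕ) := Fintype.piFinset (fun _ => Finset.Icc 1 9)
    ((T.filter (fun l => 25 < ∑ i, l i ∧ Finset.univ.sup l = 6)).card : ℚ) /
        ((T.filter (fun l => Finset.univ.sup l = 6)).card : ℚ) <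
      ((T.filter (fun l => 25 < ∑ i, l i)).card : ℚ) / (T.card : ℚ) := by
  intro T
  -- total count
  have hT : T.card = 59049 := by
    simp [T, Fintype.card_piFinset, Nat.card_Icc]
  -- characterization of sup = 6
  have hsup : ∀ l : Fin 5 → ℕ, Finset.univ.sup l = 6 ↔
      (∀ i, l i ≤ 6) ∧ ∃ i, l i = 6 := by
    intro l
    constructor
    · intro h
      constructor
      · intro i; rw [← h]; exact Finset.le_sup (Finset.mem_univ i)
      · obtain ⟨i, -, hi⟩ := Finset.exists_mem_eq_sup Finset.univ
          (Finset.univ_nonempty) l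
        exact ⟨i, by rw [← hi, h]⟩
    · rintro ⟨hle, i, hi⟩
      refine le_antisymm (Finset.sup_le fun j _ => hle j) ?_
      rw [← hi]; exact Finset.le_sup (Finset.mem_univ i)
  -- denominator = 4651
  have hb : (T.filter (fun l => Finset.univ.sup l = 6)).card = 4651 := by
    have heq : T.filter (fun l => Finset.univ.sup l = 6) =
        Fintype.piFinset (fun _ : Fin 5 => Finset.Icc 1 6) \
          Fintype.piFinset (fun _ : Fin 5 => Finset.Icc 1 5) := by
      ext l
      simp only [Finset.mem_filter, Finset.mem_sdiff, Fintype.mem_piFinset,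
        Finset.mem_Icc, hsup, T]
      constructor
      · rintro ⟨h1, h2, i, hi⟩
        refine ⟨fun j => ⟨(h1 j).1, h2 j⟩, fun hall => ?_⟩
        have := (hall i).2
        omega
      · rintro ⟨h1, h2⟩
        push_neg at h2
        obtain ⟨i, hi⟩ := h2
        have h1i := h1 i
        refine ⟨fun j => ⟨(h1 j).1, le_trans (h1 j).2 (by norm_num)⟩,
          fun j => (h1 j).2, i, ?_⟩
        omega
    rw [heq, Finset.card_sdiff_of_subset]
    · simp [Fintype.card_piFinset, Nat.card_Icc]
    · intro l hl
      simp only [Fintype.mem_piFinset, Finset.mem_Icc] at hl ⊢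
      intro i; exact ⟨(hl i).1, le_trans (hl i).2 (by norm_num)⟩
  -- numerator of conditional ≤ 126
  have ha : (T.filter (fun l => 25 < ∑ i, l i ∧ Finset.univ.sup l = 6)).card ≤ 126 := by
    rw [← count126]
    apply Finset.card_le_card
    intro l hl
    simp only [Finset.mem_filter, Fintype.mem_piFinset, Finset.mem_Icc, hsup, T] at hl ⊢
    obtain ⟨h1, h2, h3, -⟩ := hl
    exact ⟨fun i => ⟨(h1 i).1, h3 i⟩, h2⟩
  -- prior numerator ≥ 3124
  have hc : 3124 ≤ (T.filter (fun l => 25 < ∑ i, l i)).card := by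
    have hsub : (Fintype.piFinset (fun _ : Fin 5 => Finset.Icc 5 9)).erase
        (fun _ => 5) ⊆ T.filter (fun l => 25 < ∑ i, l i) := by
      intro l hl
      simp only [Finset.mem_erase, Fintype.mem_piFinset, Finset.mem_Icc] at hl
      obtain ⟨hne, hl⟩ := hl
      have hex : ∃ i, 5 < l i := by
        by_contra h
        push_neg at h
        exact hne (funext fun i => le_antisymm (h i) (hl i).1)
      obtain ⟨i, hi⟩ := hex
      simp only [Finset.mem_filter, Fintype.mem_piFinset, Finset.mem_Icc, T]
      refine ⟨fun j => ⟨le_trans (by norm_num) (hl j).1, (hl j).2⟩, ?_⟩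
      calc (25 : ℕ) = ∑ _j : Fin 5, 5 := by simp
        _ < ∑ j, l j := by
            apply Finset.sum_lt_sum (fun j _ => (hl j).1) ⟨i, Finset.mem_univ i, hi⟩
    have hcard : ((Fintype.piFinset (fun _ : Fin 5 => Finset.Icc 5 9)).erase
        (fun _ => 5)).card = 3124 := by
      rw [Finset.card_erase_of_mem]
      · simp [Fintype.card_piFinset, Nat.card_Icc]
      · simp [Fintype.mem_piFinset]
    calc 3124 = _ := hcard.symm
      _ ≤ _ := Finset.card_le_card hsub
  -- conclude
  rw [hT, hb]
  calc ((T.filter (fun l => 25 < ∑ i, l i ∧ Finset.univ.sup l = 6)).card : ℚ) / 4651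
      ≤ 126 / 4651 := by
        apply div_le_div_of_nonneg_right ?_ (by norm_num)
        · exact_mod_cast ha
    _ < 3124 / 59049 := by norm_num
    _ ≤ ((T.filter (fun l => 25 < ∑ i, l i)).card : ℚ) / 59049 := by
        apply div_le_div_of_nonneg_right ?_ (by norm_num)
        · exact_mod_cast hc
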